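/- arXiv:1810.03578 — 2 statements merged into one kernel-verified Lean document; each statement's English description precedes it below -/
import Mathlib

section
/- Let C ⊆ ℝ^{n+1} be a closed cone with vertex at the origin and p ∈ ℝ^{n+1} with p ∉ C. If for every r ∈ (0, ‖p‖/2) the open ball centered at r·(p/‖p‖) of radius r is disjoint from C, then ⟪x, p⟫ ≤ 0 for every x ∈ C. -/
open Set Metric

section

variable {E : Type*} [NormedAddCommGroup E] [InnerProductSpace ℝ E]

/-- Rescaling `x` to `t • x` with `t * ‖x‖ ^ 2 = r * ⟪x, u⟫` gives
`‖t • x - r • u‖ ^ 2 = r ^ 2 - t * r * ⟪x, u⟫ < r ^ 2`. -/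
theorem exists_pos_smul_mem_ball_of_inner_pos {x u : E} (hu : ‖u‖ = 1)
    (hxu : 0 < inner ℝ x u) {r : ℝ} (hr : 0 < r) :
    ∃ t : ℝ, 0 < t ∧ t • x ∈ ball (r • u) r := by
  have hx : x ≠ 0 := by
    rintro rfl
    simp at hxu
  have hxn : 0 < ‖x‖ ^ 2 := by positivity
  set t := r * inner ℝ x u / ‖x‖ ^ 2
  have ht : 0 < t := by positivity
  have htx : t * ‖x‖ ^ 2 = r * inner ℝ x u := div_mul_cancel₀ _ hxn.ne'
  refine ⟨t, ht, ?_⟩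
  rw [mem_ball, dist_eq_norm, ← sq_lt_sq₀ (norm_nonneg _) hr.le]
  have hsq : ‖t • x - r • u‖ ^ 2 = r ^ 2 - t * r * inner ℝ x u := by
    rw [norm_sub_sq_real, norm_smul, norm_smul, real_inner_smul_left, real_inner_smul_right, hu,
      Real.norm_of_nonneg ht.le, Real.norm_of_nonneg hr.le]
    linear_combination t * htx
  rw [hsq]
  nlinarith [mul_pos (mul_pos ht hr) hxu]

theorem inner_nonpos_of_ball_disjoint_cone {C : Set E}
    (hCone : ∀ x ∈ C, ∀ t : ℝ, 0 ≤ t → t • x ∈ C) {u : E} (hu : ‖u‖ = 1) {r : ℝ} (hr : 0 < r)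
    (hball : ball (r • u) r ∩ C = ∅) {x : E} (hx : x ∈ C) :
    inner ℝ x u ≤ 0 := by
  by_contra! hxu
  obtain ⟨t, ht, htx⟩ := exists_pos_smul_mem_ball_of_inner_pos hu hxu hr
  exact (eq_empty_iff_forall_notMem.mp hball) (t • x) ⟨htx, hCone x hx t ht.le⟩

end

theorem stmt1_general {n : ℕ} (C : Set (EuclideanSpace ℝ (Fin (n + 1))))
    (hCone : ∀ x ∈ C, ∀ t : ℝ, 0 ≤ t → t • x ∈ C)
    (p : EuclideanSpace ℝ (Fin (n + 1)))
    (hballs : ∀ r : ℝ, 0 < r → r < ‖p‖ / 2 →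
      Metric.ball (r • (‖p‖⁻¹ • p)) r ∩ C = ∅) :
    ∀ x ∈ C, (inner ℝ x p : ℝ) ≤ 0 := by
  intro x hx
  rcases eq_or_ne p 0 with rfl | hp
  · simp
  have hpn : 0 < ‖p‖ := norm_pos_iff.mpr hp
  have hu : ‖‖p‖⁻¹ • p‖ = 1 := norm_smul_inv_norm hp
  have hxu := inner_nonpos_of_ball_disjoint_cone hCone hu (by positivity : 0 < ‖p‖ / 4)
    (hballs _ (by positivity) (by linarith)) hx
  rw [real_inner_smul_right] at hxu
  exact nonpos_of_mul_nonpos_right hxu (inv_pos.mpr hpn)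

theorem stmt1 {n : ℕ} (C : Set (EuclideanSpace ℝ (Fin (n + 1))))
    (hC : IsClosed C)
    (hCone : ∀ x ∈ C, ∀ t : ℝ, 0 ≤ t → t • x ∈ C)
    (p : EuclideanSpace ℝ (Fin (n + 1))) (hp : p ∉ C)
    (hballs : ∀ r : ℝ, 0 < r → r < ‖p‖ / 2 →
      Metric.ball (r • (‖p‖⁻¹ • p)) r ∩ C = ∅) :
    ∀ x ∈ C, (inner ℝ x p : ℝ) ≤ 0 :=
  stmt1_general C hCone p hballs
end

section
/- The eigenvalues of the Newton operator P_r of a symmetric endomorphism A are given by S_r(A_i), where A_i denotes the (n-1)-tuple of eigenvalues of A with k_i omitted: if A e_i = k_i e_i, then P_r e_i = S_r(k_1, …, k̂_i, …, k_n) e_i. -/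
/-! On an eigenvector `e_i`, the recursion `P_{r+1} = S_{r+1} id - A P_r` becomes the scalar
recursion `p_{r+1} = S_{r+1}(k) - k_i p_r`, and splitting the subsets by whether they contain `i`,
`S_{r+1}(k) = S_{r+1}(A_i) + k_i S_r(A_i)`, shows that `p_r = S_r(A_i)` solves it. -/

open Finset

/-- The `r`-th elementary symmetric polynomial of `k 1, …, k n`. -/
noncomputable def esymm {n : ℕ} (k : Fin n → ℝ) (r : ℕ) : ℝ :=
  ∑ s ∈ Finset.univ.powersetCard r, ∏ i ∈ s, k i

/-- The Newton operators of an endomorphism `A`, relative to a sequence `S` of scalars: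
`P 0 = id`, `P (r+1) = S (r+1) • id - A ∘ P r`. -/
noncomputable def newtonOp {E : Type*} [AddCommGroup E] [Module ℝ E]
    (A : E →ₗ[ℝ] E) (S : ℕ → ℝ) : ℕ → (E →ₗ[ℝ] E)
  | 0 => LinearMap.id
  | r + 1 => S (r + 1) • LinearMap.id - A ∘ₗ newtonOp A S r

/-- The `r`-th elementary symmetric polynomial of `k` restricted to a finite index set `s`. -/
noncomputable def esymmOn {n : ℕ} (s : Finset (Fin n)) (k : Fin n → ℝ) (r : ℕ) : ℝ :=
  ∑ t ∈ s.powersetCard r, ∏ i ∈ t, k i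

theorem newtonOp_apply_of_eigenvector {E : Type*} [AddCommGroup E] [Module ℝ E]
    {A : E →ₗ[ℝ] E} {v : E} {c : ℝ} (hv : A v = c • v) {S T : ℕ → ℝ} (hT : T 0 = 1)
    (hS : ∀ r, S (r + 1) = T (r + 1) + c * T r) (r : ℕ) :
    newtonOp A S r v = T r • v := by
  induction r with
  | zero => simp [newtonOp, hT]
  | succ r ih =>
    rw [newtonOp, LinearMap.sub_apply, LinearMap.smul_apply, LinearMap.id_apply,
      LinearMap.comp_apply, ih, map_smul, hv, smul_smul, ← sub_smul, hS]
    ring_nf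

theorem Multiset.esymm_cons {R : Type*} [CommSemiring R] (a : R) (s : Multiset R) (r : ℕ) :
    (a ::ₘ s).esymm (r + 1) = s.esymm (r + 1) + a * s.esymm r := by
  simp only [Multiset.esymm, Multiset.powersetCard_cons, Multiset.map_add, Multiset.sum_add,
    Multiset.map_map, Function.comp_def, Multiset.prod_cons, Multiset.sum_map_mul_left]

theorem esymmOn_zero {n : ℕ} (s : Finset (Fin n)) (k : Fin n → ℝ) : esymmOn s k 0 = 1 := by
  simp [esymmOn]

theorem esymmOn_cons {n : ℕ} {s : Finset (Fin n)} {i : Fin n} (hi : i ∉ s) (k : Fin n → ℝ)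
    (r : ℕ) : esymmOn (s.cons i hi) k (r + 1) = esymmOn s k (r + 1) + k i * esymmOn s k r := by
  simp only [esymmOn, ← Finset.esymm_map_val, Finset.cons_val, Multiset.map_cons,
    Multiset.esymm_cons]

theorem esymm_succ_eq_esymmOn_erase {n : ℕ} (k : Fin n → ℝ) (i : Fin n) (r : ℕ) :
    esymm k (r + 1) =
      esymmOn (univ.erase i) k (r + 1) + k i * esymmOn (univ.erase i) k r := by
  have hi : i ∉ univ.erase i := notMem_erase i univ
  have h_univ : (univ.erase i).cons i hi = univ := by
    rw [cons_eq_insert, insert_erase (mem_univ i)]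
  rw [← esymmOn_cons hi, h_univ]
  rfl

theorem stmt19_general {n : ℕ} (A : EuclideanSpace ℝ (Fin n) →ₗ[ℝ] EuclideanSpace ℝ (Fin n))
    (b : OrthonormalBasis (Fin n) ℝ (EuclideanSpace ℝ (Fin n)))
    (k : Fin n → ℝ) (hb : ∀ i, A (b i) = k i • b i) (r : ℕ) (i : Fin n) :
    newtonOp A (esymm k) r (b i) = esymmOn (Finset.univ.erase i) k r • b i :=
  newtonOp_apply_of_eigenvector (hb i) (esymmOn_zero _ k) (esymm_succ_eq_esymmOn_erase k i) r

/-- The eigenvalues of the Newton operator `P r` are the elementary symmetric functions of the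
eigenvalues of `A` with one eigenvalue omitted. -/
theorem stmt19 {n : ℕ} (A : EuclideanSpace ℝ (Fin n) →ₗ[ℝ] EuclideanSpace ℝ (Fin n))
    (hA : LinearMap.IsSymmetric A)
    (b : OrthonormalBasis (Fin n) ℝ (EuclideanSpace ℝ (Fin n)))
    (k : Fin n → ℝ) (hb : ∀ i, A (b i) = k i • b i) (r : ℕ) (i : Fin n) :
    newtonOp A (esymm k) r (b i) = esymmOn (Finset.univ.erase i) k r • b i :=
  stmt19_general A b k hb r i
end
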